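/- arXiv:1704.00701 — 4 statements merged into one kernel-verified Lean document; each statement's English description precedes it below -/
import Mathlib

section
/- Each operator 𝔗_i satisfies the quadratic relation 𝔗_i² = (v−1)·𝔗_i + v·id on 𝔐. (Theorem 1.1, quadratic relation, of 'Hecke Modules from Metaplectic Ice'.) -/
/-!
Write `𝔗_i = D + A` with `D = diag c`, `c w = (1 - v) x_w / (1 - x_w)`, `x_w = (wz)^{α_i}`.
Because `A` reads the component `s_i w`, moving `diag c` past it replaces `c` by
`w ↦ c (s_i w)`, and `(s_i w z)^{α_i} = x_w⁻¹`. With `A² = diag Q` from assumption (a) this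
gives `𝔗_i² = diag (c² + Q) + diag (c + c ∘ s_i) ∘ A`, so the relation reduces to the
scalar identities `c(x) + c(x⁻¹) = v - 1` and `c(x)² + Q(x) = (v - 1) c(x) + v`, which hold
whenever `x ≠ 1`, i.e. by regularity of `z`.

The family of maps is encoded as `A i w : M (s i * w) →ₗ[ℂ] M w`, i.e. `A i w` is the map
`A_i^{s_i w}` of the paper (an equivalent parametrization, since `s i` is an involution),
which avoids dependent-type casts.
-/

noncomputable section

/-- The multiplicative group structure on `A ≃+ A` (composition), which the older Mathlib
provided through `AddAut A`; `AddAut` is now an additive group. -/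
instance addEquivSelfGroupOld (A : Type*) [Add A] : Group (A ≃+ A) where
  mul g h := AddEquiv.trans h g
  one := AddEquiv.refl _
  inv := AddEquiv.symm
  mul_assoc _ _ _ := rfl
  one_mul _ := rfl
  mul_one _ := rfl
  inv_mul_cancel := AddEquiv.self_trans_symm

/-- Alternating composite: `altComp f g m = ⋯ ∘ g ∘ f` with `m` factors, rightmost `f`. -/
def altComp {E : Type*} [AddCommGroup E] [Module ℂ E] (f g : E →ₗ[ℂ] E) : ℕ → (E →ₗ[ℂ] E)
  | 0 => LinearMap.id
  | m + 1 => altComp g f m ∘ₗ f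

/-- The "intertwining" part of the Hecke operator: `(φ_w)_w ↦ (A_i^{s_i w} φ_{s_i w})_w`. -/
def heckeA {W : Type*} [Group W] {r : ℕ} (s : Fin r → W)
    (M : W → Type*) [∀ w, AddCommGroup (M w)] [∀ w, Module ℂ (M w)]
    (A : ∀ (i : Fin r) (w : W), M (s i * w) →ₗ[ℂ] M w) (i : Fin r) :
    (∀ w, M w) →ₗ[ℂ] ∀ w, M w where
  toFun φ w := A i w (φ (s i * w))
  map_add' φ ψ := by funext w; simp
  map_smul' c φ := by funext w; simp

/-- The diagonal operator multiplying the `w`-component by the scalar `c w`. -/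
def diagOp {W : Type*} (M : W → Type*) [∀ w, AddCommGroup (M w)] [∀ w, Module ℂ (M w)]
    (c : W → ℂ) : (∀ w, M w) →ₗ[ℂ] ∀ w, M w where
  toFun φ w := c w • φ w
  map_add' φ ψ := by funext w; simp
  map_smul' t φ := by
    funext w
    simp only [Pi.smul_apply, RingHom.id_apply]
    exact smul_comm _ _ _

/-- The Hecke operator `𝔗_i` on `𝔐 = Π w, M w`:
`(𝔗_i φ)_w = ((1−v)(wz)^{α_i} / (1 − (wz)^{α_i})) φ_w + A_i^{s_i w} (φ_{s_i w})`,
where `(wz)^μ = z(w⁻¹ μ)`. -/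
def heckeT {Λ W : Type*} [AddCommGroup Λ] [Group W] {r : ℕ}
    (σ : W →* Λ ≃+ Λ) (s : Fin r → W) (α : Fin r → Λ) (z : Λ → ℂ) (v : ℂ)
    (M : W → Type*) [∀ w, AddCommGroup (M w)] [∀ w, Module ℂ (M w)]
    (A : ∀ (i : Fin r) (w : W), M (s i * w) →ₗ[ℂ] M w) (i : Fin r) :
    (∀ w, M w) →ₗ[ℂ] ∀ w, M w :=
  diagOp M (fun w => ((1 - v) * z (σ w⁻¹ (α i))) / (1 - z (σ w⁻¹ (α i)))) + heckeA s M A i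

section HeckeCoefficient

variable {K : Type*} [Field K] {x y : K}

theorem one_sub_ne_zero_of_mul_eq_one (hxy : x * y = 1) (hx : x ≠ 1) : 1 - y ≠ 0 :=
  sub_ne_zero.2 fun hy => hx (by simpa [← hy] using hxy)

theorem hecke_coeff_add_of_mul_eq_one (v : K) (hxy : x * y = 1) (hx : x ≠ 1) :
    (1 - v) * x / (1 - x) + (1 - v) * y / (1 - y) = v - 1 := by
  have hx' : 1 - x ≠ 0 := sub_ne_zero.2 hx.symm
  have hy' := one_sub_ne_zero_of_mul_eq_one hxy hx
  field_simp
  linear_combination (v - 1) * hxy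

theorem hecke_coeff_sq_add_of_mul_eq_one (v : K) (hxy : x * y = 1) (hx : x ≠ 1) :
    ((1 - v) * x / (1 - x)) ^ 2 + (1 - v * x) * (1 - v * y) / ((1 - x) * (1 - y)) =
      (v - 1) * ((1 - v) * x / (1 - x)) + v := by
  have hx' : 1 - x ≠ 0 := sub_ne_zero.2 hx.symm
  have hy' := one_sub_ne_zero_of_mul_eq_one hxy hx
  field_simp
  linear_combination (v + v * x - v ^ 2 * x - 1) * hxy

end HeckeCoefficient

section DiagonalOperators

variable {W : Type*} (M : W → Type*) [∀ w, AddCommGroup (M w)] [∀ w, Module ℂ (M w)]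

@[simp]
theorem diagOp_apply (c : W → ℂ) (φ : ∀ w, M w) (w : W) : diagOp M c φ w = c w • φ w := rfl

theorem diagOp_comp_diagOp (c d : W → ℂ) : diagOp M c ∘ₗ diagOp M d = diagOp M (c * d) := by
  ext φ w
  simp [mul_smul]

theorem diagOp_add (c d : W → ℂ) : diagOp M (c + d) = diagOp M c + diagOp M d := by
  ext φ w
  simp [add_smul]

theorem diagOp_smul (a : ℂ) (c : W → ℂ) : diagOp M (a • c) = a • diagOp M c := by
  ext φ w
  simp [mul_smul]

theorem diagOp_const (a : ℂ) : diagOp M (fun _ => a) = a • LinearMap.id := by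
  ext φ w
  simp

variable [Group W] {r : ℕ} (s : Fin r → W) (A : ∀ (i : Fin r) (w : W), M (s i * w) →ₗ[ℂ] M w)

@[simp]
theorem heckeA_apply (i : Fin r) (φ : ∀ w, M w) (w : W) :
    heckeA s M A i φ w = A i w (φ (s i * w)) := rfl

theorem heckeA_comp_diagOp (i : Fin r) (c : W → ℂ) :
    heckeA s M A i ∘ₗ diagOp M c = diagOp M (fun w => c (s i * w)) ∘ₗ heckeA s M A i := by
  ext φ w
  simp

theorem diagOp_add_heckeA_comp_self {i : Fin r} {c Q : W → ℂ} {a b : ℂ}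
    (hQ : heckeA s M A i ∘ₗ heckeA s M A i = diagOp M Q)
    (hsum : ∀ w, c w + c (s i * w) = a) (hsq : ∀ w, c w ^ 2 + Q w = a * c w + b) :
    (diagOp M c + heckeA s M A i) ∘ₗ (diagOp M c + heckeA s M A i) =
      a • (diagOp M c + heckeA s M A i) + b • LinearMap.id := by
  set D := diagOp M c
  set T := heckeA s M A i
  calc (D + T) ∘ₗ (D + T) = D ∘ₗ D + T ∘ₗ T + (D ∘ₗ T + T ∘ₗ D) := by
        simp only [LinearMap.comp_add, LinearMap.add_comp]
        abel
    _ = diagOp M (c * c + Q) + diagOp M (c + fun w => c (s i * w)) ∘ₗ T := by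
        rw [diagOp_comp_diagOp, hQ, heckeA_comp_diagOp, diagOp_add, diagOp_add,
          LinearMap.add_comp]
    _ = diagOp M (a • c + fun _ => b) + diagOp M (fun _ => a) ∘ₗ T := by
        have hsq' : c * c + Q = a • c + fun _ => b := funext fun w => by simpa [sq] using hsq w
        rw [hsq', show (c + fun w => c (s i * w)) = fun _ => a from funext hsum]
    _ = a • (D + T) + b • LinearMap.id := by
        rw [diagOp_add, diagOp_smul, diagOp_const, diagOp_const, LinearMap.smul_comp,
          LinearMap.id_comp, smul_add]
        abel

end DiagonalOperators

theorem apply_inv_mul_eq_neg_of_apply_eq_neg {Λ W : Type*} [AddCommGroup Λ] [Group W]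
    (σ : W →* Λ ≃+ Λ) {t : W} {β : Λ} (ht : t * t = 1) (hβ : σ t β = -β) (w : W) :
    σ (t * w)⁻¹ β = -σ w⁻¹ β := by
  rw [mul_inv_rev, inv_eq_of_mul_eq_one_right ht, map_mul]
  change σ w⁻¹ (σ t β) = _
  rw [hβ, map_neg]

theorem heckeT_quadratic_general
    -- Λ: free abelian group of finite rank
    {Λ : Type*} [AddCommGroup Λ]
    -- W: finite Weyl group acting on Λ
    {W : Type*} [Group W] {r : ℕ}
    (σ : W →* Λ ≃+ Λ) (s : Fin r → W) (α : Fin r → Λ) (pair : Fin r → Λ →+ ℤ)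
    -- Φ: reduced crystallographic root system inside Λ, stable under W
    (Φ : Set Λ)
    (hΦW : ∀ (w : W), ∀ μ ∈ Φ, σ w μ ∈ Φ)
    (hα : ∀ i, α i ∈ Φ) (hpair : ∀ i, pair i (α i) = 2)
    (hrefl : ∀ (i : Fin r) (μ : Λ), σ (s i) μ = μ - pair i μ • α i)
    (hs2 : ∀ i, s i * s i = 1)
    -- z : a regular element of T̂(ℂ) = Hom(Λ, ℂˣ)
    (z : Λ → ℂ) (hz0 : z 0 = 1) (hzadd : ∀ μ ν, z (μ + ν) = z μ * z ν)
    (hzreg : ∀ μ ∈ Φ, z μ ≠ 1)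
    (v : ℂ)
    -- the data of Assumptions 1.1
    (M : W → Type*) [∀ w, AddCommGroup (M w)] [∀ w, Module ℂ (M w)]
    (A : ∀ (i : Fin r) (w : W), M (s i * w) →ₗ[ℂ] M w)
    -- (a): A_i^{s_i w} ∘ A_i^w is the scalar (6) of the paper
    (ha : ∀ (i : Fin r) (w : W) (φ : ∀ u, M u),
      heckeA s M A i (heckeA s M A i φ) w =
        (((1 - v * z (σ w⁻¹ (α i))) * (1 - v * z (σ w⁻¹ (-α i)))) /
          ((1 - z (σ w⁻¹ (α i))) * (1 - z (σ w⁻¹ (-α i))))) • φ w) :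
    ∀ i : Fin r,
      heckeT σ s α z v M A i ∘ₗ heckeT σ s α z v M A i =
        (v - 1) • heckeT σ s α z v M A i + v • LinearMap.id := by
  intro i
  have hsα : σ (s i) (α i) = -α i := by
    rw [hrefl, hpair, two_zsmul]
    abel
  have hreg (w : W) : z (σ w⁻¹ (α i)) ≠ 1 := hzreg _ (hΦW _ _ (hα i))
  have hinv (w : W) : z (σ w⁻¹ (α i)) * z (σ w⁻¹ (-α i)) = 1 := by
    rw [map_neg, ← hzadd, add_neg_cancel, hz0]
  refine diagOp_add_heckeA_comp_self M s A (LinearMap.ext fun φ => funext fun w => ha i w φ)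
    (fun w => ?_) (fun w => hecke_coeff_sq_add_of_mul_eq_one v (hinv w) (hreg w))
  rw [apply_inv_mul_eq_neg_of_apply_eq_neg σ (hs2 i) hsα, ← map_neg]
  exact hecke_coeff_add_of_mul_eq_one v (hinv w) (hreg w)

/-- **Theorem 1.1 of "Hecke Modules from Metaplectic Ice" (quadratic relation).**
Under Assumptions 1.1 of the paper, each `𝔗_i` satisfies `𝔗_i² = (v−1)𝔗_i + v`. -/
theorem heckeT_quadratic
    -- Λ: free abelian group of finite rank
    {Λ : Type*} [AddCommGroup Λ] [Module.Free ℤ Λ] [Module.Finite ℤ Λ]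
    -- W: finite Weyl group acting on Λ
    {W : Type*} [Group W] [Fintype W] {r : ℕ}
    (σ : W →* Λ ≃+ Λ) (s : Fin r → W) (α : Fin r → Λ) (pair : Fin r → Λ →+ ℤ)
    -- Φ: reduced crystallographic root system inside Λ, stable under W
    (Φ : Set Λ) (hΦfin : Φ.Finite) (hΦneg : ∀ μ ∈ Φ, -μ ∈ Φ)
    (hΦW : ∀ (w : W), ∀ μ ∈ Φ, σ w μ ∈ Φ)
    (hΦred : ∀ μ ∈ Φ, (2 : ℤ) • μ ∉ Φ)
    (hα : ∀ i, α i ∈ Φ) (hpair : ∀ i, pair i (α i) = 2)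
    (hrefl : ∀ (i : Fin r) (μ : Λ), σ (s i) μ = μ - pair i μ • α i)
    (hs2 : ∀ i, s i * s i = 1)
    (hgen : Subgroup.closure (Set.range s) = ⊤)
    -- z : a regular element of T̂(ℂ) = Hom(Λ, ℂˣ)
    (z : Λ → ℂ) (hz0 : z 0 = 1) (hzadd : ∀ μ ν, z (μ + ν) = z μ * z ν)
    (hzne : ∀ μ, z μ ≠ 0) (hzreg : ∀ μ ∈ Φ, z μ ≠ 1)
    (v : ℂ)
    -- the data of Assumptions 1.1
    (M : W → Type*) [∀ w, AddCommGroup (M w)] [∀ w, Module ℂ (M w)]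
    (A : ∀ (i : Fin r) (w : W), M (s i * w) →ₗ[ℂ] M w)
    -- (a): A_i^{s_i w} ∘ A_i^w is the scalar (6) of the paper
    (ha : ∀ (i : Fin r) (w : W) (φ : ∀ u, M u),
      heckeA s M A i (heckeA s M A i φ) w =
        (((1 - v * z (σ w⁻¹ (α i))) * (1 - v * z (σ w⁻¹ (-α i)))) /
          ((1 - z (σ w⁻¹ (α i))) * (1 - z (σ w⁻¹ (-α i))))) • φ w)
    -- (b): the braid relations (7) of the paper
    (hbraid : ∀ i j : Fin r, i ≠ j →
      altComp (heckeA s M A i) (heckeA s M A j) (orderOf (s i * s j)) =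
        altComp (heckeA s M A j) (heckeA s M A i) (orderOf (s i * s j))) :
    ∀ i : Fin r,
      heckeT σ s α z v M A i ∘ₗ heckeT σ s α z v M A i =
        (v - 1) • heckeT σ s α z v M A i + v • LinearMap.id :=
  heckeT_quadratic_general σ s α pair Φ hΦW hα hpair hrefl hs2 z hz0 hzadd hzreg v M A ha
end
end

section
/- For each i, as ℂ-linear operators on K: s_i ∘ (1 + 𝒯_i) = m_i ∘ (1 + 𝒯_i), where s_i denotes the action f ↦ s_i·f and m_i is multiplication by (1 − v z^{α_i∨})/(1 − v z^{−α_i∨}). (The identity (dtranspro) established in the proof of Theorem 2.6 of 'Hecke Modules from Metaplectic Ice'.) -/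
/-!
Put `a = z^{α_i∨}`, `c = v` and `σ = s_i`, so that `σ a = a⁻¹` and `σ` is an involution fixing `c`.
Then `f + 𝒯_i f = ((a - c)/(a - 1)) · (f - a⁻¹ σ f)`, and `h = f - a⁻¹ σ f` satisfies
`σ h = -a h`. Hence `σ (f + 𝒯_i f) = -a σ((a - c)/(a - 1)) · h`, and the identity reduces to a
rational-function identity between the two coefficients of `h`.
-/

noncomputable section

/-- The conjugated Demazure–Whittaker operator
`𝒯_i f = ((1−v)/(z^{α_i}−1))·f + ((v z^{−α_i}−1)/(z^{α_i}−1))·(s_i·f)`. -/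
def demWhitC {Λ W K : Type*} [AddCommGroup Λ] [Group W] [Field K] [Algebra ℂ K]
    {r : ℕ} (ζ : Λ → K) (τ : W →* (K ≃ₐ[ℂ] K)) (s : Fin r → W) (α : Fin r → Λ)
    (v : ℂ) (i : Fin r) : K →ₗ[ℂ] K where
  toFun f := ((1 - algebraMap ℂ K v) / (ζ (α i) - 1)) * f
      + ((algebraMap ℂ K v * ζ (-α i) - 1) / (ζ (α i) - 1)) * τ (s i) f
  map_add' f g := by simp only [map_add]; ring
  map_smul' c f := by
    simp only [Algebra.smul_def, map_mul, AlgEquiv.commutes, RingHom.id_apply]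
    ring

section Involution

variable {K F : Type*} [Field K] [FunLike F K K] [RingHomClass F K K] {σ : F} {a : K}

theorem map_sub_inv_mul_map_of_involutive (hσ : Function.Involutive σ) (ha : a ≠ 0)
    (hσa : σ a = a⁻¹) (x : K) :
    σ (x - a⁻¹ * σ x) = -a * (x - a⁻¹ * σ x) := by
  rw [map_sub, map_mul, map_inv₀, hσa, inv_inv, hσ x]
  field_simp
  ring

theorem map_div_sub_one_mul_neg (ha : a ≠ 0) (ha1 : a ≠ 1) (hσa : σ a = a⁻¹) {c : K}
    (hσc : σ c = c) :
    σ ((a - c) / (a - 1)) * -a = (1 - c * a) / (1 - c * a⁻¹) * ((a - c) / (a - 1)) := by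
  rcases eq_or_ne a c with rfl | hac
  · simp
  have hca : 1 - c * a⁻¹ ≠ 0 := by
    rw [sub_ne_zero, ne_eq, eq_comm, mul_inv_eq_one₀ ha]
    exact hac.symm
  have ha1' : a - 1 ≠ 0 := sub_ne_zero.mpr ha1
  have ha1'' : a⁻¹ - 1 ≠ 0 := sub_ne_zero.mpr (inv_ne_one.mpr ha1)
  rw [map_div₀, map_sub, map_sub, map_one, hσa, hσc]
  field_simp
  ring

end Involution

theorem self_add_demWhitC_eq {Λ W K : Type*} [AddCommGroup Λ] [Group W] [Field K] [Algebra ℂ K]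
    {r : ℕ} (ζ : Λ → K) (τ : W →* (K ≃ₐ[ℂ] K)) (s : Fin r → W) (α : Fin r → Λ) (v : ℂ)
    (i : Fin r) (ha0 : ζ (α i) ≠ 0) (ha1 : ζ (α i) ≠ 1) (hneg : ζ (-α i) = (ζ (α i))⁻¹)
    (f : K) :
    f + demWhitC ζ τ s α v i f =
      (ζ (α i) - algebraMap ℂ K v) / (ζ (α i) - 1) * (f - (ζ (α i))⁻¹ * τ (s i) f) := by
  have ha1' : ζ (α i) - 1 ≠ 0 := sub_ne_zero.mpr ha1
  simp only [demWhitC, LinearMap.coe_mk, AddHom.coe_mk, hneg]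
  field_simp
  ring

theorem demWhitC_reflection_identity_general
    -- Λ: free abelian group of finite rank
    {Λ : Type*} [AddCommGroup Λ]
    -- W: finite Weyl group acting on Λ
    {W : Type*} [Group W] {r : ℕ}
    (σ : W →* Multiplicative (AddAut Λ)) (s : Fin r → W) (α : Fin r → Λ) (pair : Fin r → Λ →+ ℤ)
    (hpair : ∀ i, pair i (α i) = 2)
    (hrefl : ∀ (i : Fin r) (μ : Λ), σ (s i) μ = μ - pair i μ • α i)
    (hs2 : ∀ i, s i * s i = 1)
    -- K ⊇ ℂ[Λ]: the fraction field, with basis elements ζ λ = z^λ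
    {K : Type*} [Field K] [Algebra ℂ K]
    (ζ : Λ → K) (hζ0 : ζ 0 = 1) (hζadd : ∀ μ ν, ζ (μ + ν) = ζ μ * ζ ν)
    (hζindep : LinearIndependent ℂ ζ)
    -- the W-action on K by ℂ-algebra automorphisms, with w·z^λ = z^{wλ}
    (τ : W →* (K ≃ₐ[ℂ] K)) (hτ : ∀ (w : W) (μ : Λ), τ w (ζ μ) = ζ (σ w μ))
    (v : ℂ) :
    ∀ (i : Fin r) (f : K),
      τ (s i) (f + demWhitC ζ τ s α v i f) =
        ((1 - algebraMap ℂ K v * ζ (α i)) / (1 - algebraMap ℂ K v * ζ (-α i))) *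
          (f + demWhitC ζ τ s α v i f) := by
  intro i f
  have hmul : ζ (α i) * ζ (-α i) = 1 := by rw [← hζadd, add_neg_cancel, hζ0]
  have hneg : ζ (-α i) = (ζ (α i))⁻¹ := eq_inv_of_mul_eq_one_right hmul
  have ha0 : ζ (α i) ≠ 0 := left_ne_zero_of_mul_eq_one hmul
  have ha1 : ζ (α i) ≠ 1 := by
    have hα0 : α i ≠ 0 := fun h => by simpa [h] using hpair i
    rw [← hζ0]
    exact hζindep.injective.ne hα0
  have hσa : τ (s i) (ζ (α i)) = (ζ (α i))⁻¹ := by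
    rw [hτ, hrefl, hpair, two_zsmul, sub_add_cancel_left, hneg]
  have hinv : Function.Involutive (τ (s i)) := fun x => by
    rw [← AlgEquiv.mul_apply, ← map_mul, hs2, map_one, AlgEquiv.one_apply]
  rw [self_add_demWhitC_eq ζ τ s α v i ha0 ha1 hneg, map_mul,
    map_sub_inv_mul_map_of_involutive hinv ha0 hσa, ← mul_assoc,
    map_div_sub_one_mul_neg ha0 ha1 hσa (AlgEquiv.commutes _ v), hneg, mul_assoc]

/-- **Identity (dtranspro) in the proof of Theorem 2.6 of "Hecke Modules from Metaplectic
Ice".**  As `ℂ`-linear operators on `K`: `s_i ∘ (1 + 𝒯_i) = m_i ∘ (1 + 𝒯_i)`, where `s_i`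
acts through `τ` and `m_i` is multiplication by `(1 − v z^{α_i∨})/(1 − v z^{−α_i∨})`. -/
theorem demWhitC_reflection_identity
    -- Λ: free abelian group of finite rank
    {Λ : Type*} [AddCommGroup Λ] [Module.Free ℤ Λ] [Module.Finite ℤ Λ]
    -- W: finite Weyl group acting on Λ
    {W : Type*} [Group W] [Fintype W] {r : ℕ}
    (σ : W →* Multiplicative (AddAut Λ)) (s : Fin r → W) (α : Fin r → Λ) (pair : Fin r → Λ →+ ℤ)
    -- Φ: the reduced crystallographic root system inside Λ
    (Φ : Set Λ) (hΦfin : Φ.Finite) (hΦneg : ∀ μ ∈ Φ, -μ ∈ Φ)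
    (hΦW : ∀ (w : W), ∀ μ ∈ Φ, σ w μ ∈ Φ)
    (hΦred : ∀ μ ∈ Φ, (2 : ℤ) • μ ∉ Φ)
    (hα : ∀ i, α i ∈ Φ) (hpair : ∀ i, pair i (α i) = 2)
    (hrefl : ∀ (i : Fin r) (μ : Λ), σ (s i) μ = μ - pair i μ • α i)
    (hs2 : ∀ i, s i * s i = 1)
    (hgen : Subgroup.closure (Set.range s) = ⊤)
    -- K ⊇ ℂ[Λ]: the fraction field, with basis elements ζ λ = z^λ
    {K : Type*} [Field K] [Algebra ℂ K]
    (ζ : Λ → K) (hζ0 : ζ 0 = 1) (hζadd : ∀ μ ν, ζ (μ + ν) = ζ μ * ζ ν)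
    (hζindep : LinearIndependent ℂ ζ)
    -- the W-action on K by ℂ-algebra automorphisms, with w·z^λ = z^{wλ}
    (τ : W →* (K ≃ₐ[ℂ] K)) (hτ : ∀ (w : W) (μ : Λ), τ w (ζ μ) = ζ (σ w μ))
    (v : ℂ) :
    ∀ (i : Fin r) (f : K),
      τ (s i) (f + demWhitC ζ τ s α v i f) =
        ((1 - algebraMap ℂ K v * ζ (α i)) / (1 - algebraMap ℂ K v * ζ (-α i))) *
          (f + demWhitC ζ τ s α v i f) :=
  demWhitC_reflection_identity_general σ s α pair hpair hrefl hs2 ζ hζ0 hζadd hζindep τ hτ v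
end
end

section
/- For each simple reflection s_i, as ℂ-linear operators on K: s_i ∘ ℐ° = m_i ∘ ℐ°, where m_i is multiplication by (1 − v z^{α_i∨})/(1 − v z^{−α_i∨}). Consequently the operator ∏_{α∨∈Φ∨₊}(1 − v z^{−α∨})^{−1} · ℐ° commutes with the W-action: w ∘ (∏_{α∨>0}(1 − v z^{−α∨})^{−1} ℐ°) = (∏_{α∨>0}(1 − v z^{−α∨})^{−1} ℐ°) for all w ∈ W. (The identities (gamtranspro) and (gamprewinv) established in the proof of Theorem 2.6 of 'Hecke Modules from Metaplectic Ice'.) -/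
/-!
Write `ℓ` for the word length with respect to the `s i`. The sign `w ↦ (-1)^#{β > 0 | wβ < 0}`
is multiplied by `-1` under right multiplication by any `s i`, so `ℓ (s i * w) = ℓ w ± 1`; by the
reduced-word description of `𝒯_w`, `𝒯_{s_i w} = 𝒯_i 𝒯_w` whenever `ℓ (s i * w) = ℓ w + 1`. Pairing
`w` with `s i * w` factors `ℐ° = (1 + 𝒯_i) ∑_{ℓ(s_i w) > ℓ(w)} 𝒯_w`, and a direct computation gives
`s_i (g + 𝒯_i g) = m_i (g + 𝒯_i g)` for every `g`. Since `s_i` permutes the positive roots other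
than `α_i` and negates `α_i`, also `s_i Δ = m_i Δ` for `Δ = ∏_{β>0} (1 - v z^{-β})`; hence
`Δ⁻¹ ℐ° f` is fixed by every `s_i`, and so by `W`.
-/

noncomputable section

open Finset

section Words

variable {W : Type*} [Group W] {r : ℕ} (s : Fin r → W)

/-- Since `sInf ∅ = 0`, this is only meaningful on the submonoid generated by the `s i`. -/
def wordLength (w : W) : ℕ :=
  sInf {n | ∃ l : List (Fin r), (l.map s).prod = w ∧ l.length = n}

theorem exists_word_of_closure_eq_top (hs2 : ∀ i, s i * s i = 1)
    (hgen : Subgroup.closure (Set.range s) = ⊤) (w : W) :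
    ∃ l : List (Fin r), (l.map s).prod = w := by
  have hw : w ∈ Subgroup.closure (Set.range s) := hgen ▸ Subgroup.mem_top w
  induction hw using Subgroup.closure_induction'' with
  | mem _ hx => obtain ⟨i, rfl⟩ := hx; exact ⟨[i], by simp⟩
  | inv_mem _ hx =>
    obtain ⟨i, rfl⟩ := hx
    exact ⟨[i], by simp [inv_eq_of_mul_eq_one_right (hs2 i)]⟩
  | one => exact ⟨[], rfl⟩
  | mul _ _ _ _ ihx ihy =>
    obtain ⟨l₁, rfl⟩ := ihx
    obtain ⟨l₂, rfl⟩ := ihy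
    exact ⟨l₁ ++ l₂, by simp⟩

variable {s}

theorem wordLength_le (l : List (Fin r)) : wordLength s (l.map s).prod ≤ l.length :=
  Nat.sInf_le ⟨l, rfl, rfl⟩

theorem exists_word_length_eq_wordLength {w : W} (hw : ∃ l : List (Fin r), (l.map s).prod = w) :
    ∃ l : List (Fin r), (l.map s).prod = w ∧ l.length = wordLength s w := by
  obtain ⟨l, hl⟩ := hw
  exact Nat.sInf_mem (s := {n | ∃ l : List (Fin r), (l.map s).prod = w ∧ l.length = n})
    ⟨l.length, l, hl, rfl⟩

theorem wordLength_mul_le {w : W} (hw : ∃ l : List (Fin r), (l.map s).prod = w) (i : Fin r) :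
    wordLength s (s i * w) ≤ wordLength s w + 1 := by
  obtain ⟨l, rfl, hl⟩ := exists_word_length_eq_wordLength hw
  simpa [hl] using wordLength_le (i :: l)

theorem neg_one_pow_length_of_mul_generator (ε : W → ℤˣ) (h1 : ε 1 = 1)
    (hmul : ∀ u i, ε (u * s i) = -ε u) (l : List (Fin r)) :
    ε (l.map s).prod = (-1) ^ l.length := by
  induction l using List.reverseRecOn with
  | nil => simpa using h1
  | append_singleton l i ih => simp [hmul, ih, pow_succ]

theorem wordLength_mul_eq_or (hs2 : ∀ i, s i * s i = 1)
    (hword : ∀ w : W, ∃ l : List (Fin r), (l.map s).prod = w) (ε : W → ℤˣ)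
    (hε : ∀ l : List (Fin r), ε (l.map s).prod = (-1) ^ l.length) (i : Fin r) (w : W) :
    wordLength s (s i * w) = wordLength s w + 1 ∨ wordLength s w = wordLength s (s i * w) + 1 := by
  have hup := wordLength_mul_le (hword w) i
  have hdown := wordLength_mul_le (hword (s i * w)) i
  rw [← mul_assoc, hs2, one_mul] at hdown
  have hne : wordLength s (s i * w) ≠ wordLength s w := by
    intro h
    obtain ⟨l, rfl, hl⟩ := exists_word_length_eq_wordLength (hword w)
    obtain ⟨l', hl', hl'len⟩ := exists_word_length_eq_wordLength (hword (s i * (l.map s).prod))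
    have hsign : (-1 : ℤˣ) ^ (l.length + 1) = (-1) ^ l'.length := by
      rw [show l.length + 1 = (i :: l).length from rfl, ← hε, ← hε l', hl']
      simp
    rw [hl'len, h, hl, pow_succ, mul_neg_one] at hsign
    exact neg_units_ne_self _ hsign
  omega

theorem eq_mul_of_wordLength_mul {M : Type*} [Monoid M] (T : Fin r → M) (Tw : W → M)
    (hTw : ∀ (w : W) (l : List (Fin r)), (l.map s).prod = w →
      (∀ l' : List (Fin r), (l'.map s).prod = w → l.length ≤ l'.length) →
      Tw w = (l.map T).prod)
    {w : W} (hw : ∃ l : List (Fin r), (l.map s).prod = w) {i : Fin r}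
    (h : wordLength s (s i * w) = wordLength s w + 1) :
    Tw (s i * w) = T i * Tw w := by
  obtain ⟨l, rfl, hl⟩ := exists_word_length_eq_wordLength hw
  have hred : ∀ l' : List (Fin r), (l'.map s).prod = (l.map s).prod → l.length ≤ l'.length :=
    fun l' h' => hl ▸ h' ▸ wordLength_le l'
  have hred' : ∀ l' : List (Fin r), (l'.map s).prod = s i * (l.map s).prod →
      (i :: l).length ≤ l'.length :=
    fun l' h' => by rw [List.length_cons, hl, ← h, ← h']; exact wordLength_le l'
  rw [hTw _ (i :: l) (by simp) hred', hTw _ l rfl hred]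
  simp

theorem sum_eq_one_add_mul_sum_ascents {M : Type*} [Fintype W] [Semiring M] (T : Fin r → M)
    (Tw : W → M) {i : Fin r} (hs2 : s i * s i = 1)
    (hdich : ∀ w, wordLength s (s i * w) = wordLength s w + 1 ∨
      wordLength s w = wordLength s (s i * w) + 1)
    (hstep : ∀ w, wordLength s (s i * w) = wordLength s w + 1 → Tw (s i * w) = T i * Tw w) :
    ∑ w, Tw w = (1 + T i) * ∑ w with wordLength s (s i * w) = wordLength s w + 1, Tw w := by
  have hinv : ∀ w, s i * (s i * w) = w := fun w => by rw [← mul_assoc, hs2, one_mul]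
  have hdesc : ∑ w with ¬wordLength s (s i * w) = wordLength s w + 1, Tw w =
      ∑ w with wordLength s (s i * w) = wordLength s w + 1, Tw (s i * w) := by
    refine sum_nbij' (s i * ·) (s i * ·) ?_ ?_ (fun w _ => hinv w) (fun w _ => hinv w)
      (fun w _ => by rw [hinv])
    all_goals
      intro w hw
      simp only [mem_filter, mem_univ, true_and, hinv] at hw ⊢
      have := hdich w
      omega
  rw [← sum_filter_add_sum_filter_not univ (fun w => wordLength s (s i * w) = wordLength s w + 1),
    hdesc, add_mul, one_mul, mul_sum]
  congr 1
  exact sum_congr rfl fun w hw => hstep w (mem_filter.mp hw).2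

end Words

theorem odd_card_filter_comp_add_card_filter {α : Type*} [DecidableEq α] {S : Finset α}
    {a : α} (ha : a ∈ S) {t : α → α} (ht : Function.Involutive t)
    (hmaps : ∀ b ∈ S.erase a, t b ∈ S.erase a) (p : α → Prop) [DecidablePred p]
    (hpa : p (t a) ↔ ¬p a) :
    Odd (#{b ∈ S | p (t b)} + #{b ∈ S | p b}) := by
  have hswap : #{b ∈ S.erase a | p (t b)} = #{b ∈ S.erase a | p b} :=
    card_nbij' t t (fun b _ => by simp_all) (fun b _ => by simp_all [ht b])
      (fun b _ => ht b) (fun b _ => ht b)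
  have hsplit : ∀ q : α → Prop, [DecidablePred q] →
      #{b ∈ S | q b} = #{b ∈ S.erase a | q b} + if q a then 1 else 0 := by
    intro q _
    rw [← insert_erase ha, filter_insert]
    split_ifs <;> simp
  rw [hsplit, hsplit, hswap]
  by_cases h : p a <;> simp [h, hpa]

theorem prod_comp_mul_eq_mul_prod {α M : Type*} [DecidableEq α] [CommMonoid M] (f : α → M)
    {S : Finset α} {a : α} (ha : a ∈ S) {t : α → α} (ht : Function.Involutive t)
    (hmaps : ∀ b ∈ S.erase a, t b ∈ S.erase a) :
    (∏ b ∈ S, f (t b)) * f a = f (t a) * ∏ b ∈ S, f b := by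
  have hswap : ∏ b ∈ S.erase a, f (t b) = ∏ b ∈ S.erase a, f b :=
    prod_nbij' t t hmaps hmaps (fun b _ => ht b) (fun b _ => ht b) (fun _ _ => rfl)
  rw [← mul_prod_erase S _ ha, ← mul_prod_erase S f ha, hswap]
  ac_rfl

theorem toAdd_map_mul_apply {Λ W : Type*} [AddCommGroup Λ] [Group W]
    (σ : W →* Multiplicative (AddAut Λ)) (u w : W) (μ : Λ) :
    Multiplicative.toAdd (σ (u * w)) μ =
      Multiplicative.toAdd (σ u) (Multiplicative.toAdd (σ w) μ) := by
  rw [map_mul]; rfl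

section PositiveRoots

variable {Λ : Type*} [AddCommGroup Λ] [DecidableEq Λ]

def inversionCount (Φp : Finset Λ) (g : Λ → Λ) : ℕ := #{β ∈ Φp | -g β ∈ Φp}

theorem inversionCount_id {Φp : Finset Λ} (hdisj : ∀ μ ∈ Φp, -μ ∉ Φp) :
    inversionCount Φp id = 0 :=
  card_eq_zero.mpr (filter_false_of_mem hdisj)

theorem mapsTo_erase_of_reflection {Φp : Finset Λ} (hdisj : ∀ μ ∈ Φp, -μ ∉ Φp) {a : Λ}
    (ha : a ∈ Φp) {t : Λ → Λ} (ht : Function.Involutive t) (hta : t a = -a)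
    (hperm : ∀ β ∈ Φp, β ≠ a → t β ∈ Φp) :
    ∀ β ∈ Φp.erase a, t β ∈ Φp.erase a := by
  intro β hβ
  obtain ⟨hβa, hβ⟩ := mem_erase.mp hβ
  refine mem_erase.mpr ⟨fun h => hdisj a ha ?_, hperm β hβ hβa⟩
  rwa [← hta, ← h, ht β]

theorem neg_one_pow_inversionCount_comp {Φp : Finset Λ} {a : Λ} (ha : a ∈ Φp) {t : Λ → Λ}
    (ht : Function.Involutive t) (hta : t a = -a) (hmaps : ∀ β ∈ Φp.erase a, t β ∈ Φp.erase a)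
    (g : Λ ≃+ Λ) (hga : g a ∈ Φp ↔ -g a ∉ Φp) :
    (-1 : ℤˣ) ^ inversionCount Φp (g ∘ t) = -(-1) ^ inversionCount Φp g := by
  have hodd : Odd (inversionCount Φp (g ∘ t) + inversionCount Φp g) :=
    odd_card_filter_comp_add_card_filter ha ht hmaps (fun β => -g β ∈ Φp)
      (by rw [hta, map_neg, neg_neg]; exact hga)
  calc (-1 : ℤˣ) ^ inversionCount Φp (g ∘ t)
      = (-1) ^ (inversionCount Φp (g ∘ t) + inversionCount Φp g) * (-1) ^ inversionCount Φp g := by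
        rw [pow_add, mul_assoc, Int.units_mul_self, mul_one]
    _ = -(-1) ^ inversionCount Φp g := by rw [hodd.neg_one_pow, neg_one_mul]

theorem neg_one_pow_inversionCount_list_prod {W : Type*} [Group W] {r : ℕ}
    (σ : W →* Multiplicative (AddAut Λ)) (s : Fin r → W) (α : Fin r → Λ) {Φp : Finset Λ}
    (hdisj : ∀ μ ∈ Φp, -μ ∉ Φp) (hαp : ∀ i, α i ∈ Φp)
    (hσinv : ∀ i, Function.Involutive ⇑(Multiplicative.toAdd (σ (s i))))
    (hσα : ∀ i, Multiplicative.toAdd (σ (s i)) (α i) = -α i)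
    (hperm : ∀ (i : Fin r), ∀ β ∈ Φp, β ≠ α i → Multiplicative.toAdd (σ (s i)) β ∈ Φp)
    (hroot : ∀ (w : W) (i : Fin r),
      Multiplicative.toAdd (σ w) (α i) ∈ Φp ↔ -Multiplicative.toAdd (σ w) (α i) ∉ Φp)
    (l : List (Fin r)) :
    (-1 : ℤˣ) ^ inversionCount Φp ⇑(Multiplicative.toAdd (σ (l.map s).prod)) = (-1) ^ l.length := by
  refine neg_one_pow_length_of_mul_generator
    (fun w => (-1) ^ inversionCount Φp ⇑(Multiplicative.toAdd (σ w)))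
    (by simp [inversionCount_id hdisj]) (fun u i => ?_) l
  have hcomp : ⇑(Multiplicative.toAdd (σ (u * s i))) =
      ⇑(Multiplicative.toAdd (σ u)) ∘ ⇑(Multiplicative.toAdd (σ (s i))) :=
    funext fun μ => toAdd_map_mul_apply σ u (s i) μ
  simp only [hcomp]
  exact neg_one_pow_inversionCount_comp (hαp i) (hσinv i) (hσα i)
    (mapsTo_erase_of_reflection hdisj (hαp i) (hσinv i) (hσα i) (hperm i)) _ (hroot u i)

end PositiveRoots

theorem algebraMap_mul_ne_one {k Λ K : Type*} [Field k] [Ring K] [Algebra k K] [Zero Λ]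
    {ζ : Λ → K} (hζ : LinearIndependent k ζ) (hζ0 : ζ 0 = 1) {μ : Λ} (hμ : μ ≠ 0) (c : k) :
    algebraMap k K c * ζ μ ≠ 1 := by
  intro h
  have hpair : LinearIndependent k ![ζ 0, ζ μ] := by
    convert hζ.comp ![0, μ] (by intro a b; fin_cases a <;> fin_cases b <;> simp [hμ, hμ.symm])
    ext j; fin_cases j <;> rfl
  have := LinearIndependent.pair_iff.mp hpair 1 (-c)
    (by rw [hζ0, one_smul, neg_smul, Algebra.smul_def, h, add_neg_cancel])
  exact one_ne_zero this.1

theorem demWhitC_apply {Λ W K : Type*} [AddCommGroup Λ] [Group W] [Field K] [Algebra ℂ K]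
    {r : ℕ} (ζ : Λ → K) (τ : W →* (K ≃ₐ[ℂ] K)) (s : Fin r → W) (α : Fin r → Λ) (v : ℂ)
    (i : Fin r) (f : K) :
    demWhitC ζ τ s α v i f = ((1 - algebraMap ℂ K v) / (ζ (α i) - 1)) * f
      + ((algebraMap ℂ K v * ζ (-α i) - 1) / (ζ (α i) - 1)) * τ (s i) f :=
  rfl

theorem reflection_apply_add_demWhitC {Λ W K : Type*} [AddCommGroup Λ] [Group W] [Field K]
    [Algebra ℂ K] {r : ℕ} (ζ : Λ → K) (τ : W →* (K ≃ₐ[ℂ] K)) (s : Fin r → W) (α : Fin r → Λ)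
    (v : ℂ) {i : Fin r} (hs2 : s i * s i = 1) (hζα : τ (s i) (ζ (α i)) = ζ (-α i))
    (hζ_mul : ζ (α i) * ζ (-α i) = 1) (hζα_ne : ζ (α i) ≠ 1)
    (hv : 1 - algebraMap ℂ K v * ζ (-α i) ≠ 0) (g : K) :
    τ (s i) (g + demWhitC ζ τ s α v i g) =
      (1 - algebraMap ℂ K v * ζ (α i)) / (1 - algebraMap ℂ K v * ζ (-α i)) *
        (g + demWhitC ζ τ s α v i g) := by
  have hinv : τ (s i) (τ (s i) g) = g := by rw [← AlgEquiv.mul_apply, ← map_mul, hs2, map_one]; rfl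
  have hx0 : ζ (α i) ≠ 0 := left_ne_zero_of_mul_eq_one hζ_mul
  have hy : ζ (-α i) = (ζ (α i))⁻¹ := eq_inv_of_mul_eq_one_right hζ_mul
  rw [hy] at hζα hv ⊢
  have hζα_inv : τ (s i) (ζ (α i))⁻¹ = ζ (α i) := by rw [map_inv₀, hζα, inv_inv]
  simp only [demWhitC_apply, hy, map_add, map_mul, map_div₀, map_sub, map_one, AlgEquiv.commutes,
    hζα, hζα_inv, hinv]
  have hx1 : ζ (α i) - 1 ≠ 0 := sub_ne_zero.mpr hζα_ne
  have hx1' : (ζ (α i))⁻¹ - 1 ≠ 0 := sub_ne_zero.mpr (inv_ne_one.mpr hζα_ne)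
  have hxV : ζ (α i) - algebraMap ℂ K v ≠ 0 := by
    contrapose! hv
    rw [← sub_eq_zero.mp hv, mul_inv_cancel₀ hx0, sub_self]
  field_simp
  ring

theorem apply_prod_one_sub_of_reflection {Λ R K : Type*} [AddCommGroup Λ] [DecidableEq Λ]
    [CommSemiring R] [Field K] [Algebra R K] (θ : K ≃ₐ[R] K) (ζ : Λ → K) (t : Λ ≃+ Λ)
    (hθ : ∀ μ, θ (ζ μ) = ζ (t μ)) {Φp : Finset Λ} {a : Λ} (ha : a ∈ Φp)
    (ht : Function.Involutive t) (hta : t a = -a) (hmaps : ∀ β ∈ Φp.erase a, t β ∈ Φp.erase a)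
    (c : R) (hc : 1 - algebraMap R K c * ζ (-a) ≠ 0) :
    θ (∏ β ∈ Φp, (1 - algebraMap R K c * ζ (-β))) =
      (1 - algebraMap R K c * ζ a) / (1 - algebraMap R K c * ζ (-a)) *
        ∏ β ∈ Φp, (1 - algebraMap R K c * ζ (-β)) := by
  have h := prod_comp_mul_eq_mul_prod (fun μ => 1 - algebraMap R K c * ζ (-μ)) ha ht hmaps
  simp only [hta, neg_neg] at h
  simp only [map_prod, map_sub, map_one, map_mul, AlgEquiv.commutes, hθ, map_neg]
  rw [div_mul_eq_mul_div, eq_div_iff hc]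
  exact h

theorem apply_inv_mul_eq_of_closure_eq_top {W R K : Type*} [Group W] [CommSemiring R] [Field K]
    [Algebra R K] (τ : W →* (K ≃ₐ[R] K)) {r : ℕ} {s : Fin r → W}
    (hgen : Subgroup.closure (Set.range s) = ⊤) {m : Fin r → K} (hm : ∀ i, m i ≠ 0) {D x : K}
    (hD : ∀ i, τ (s i) D = m i * D) (hx : ∀ i, τ (s i) x = m i * x) (w : W) :
    τ w (D⁻¹ * x) = D⁻¹ * x := by
  have hfix : Subgroup.closure (Set.range s) ≤ (MulAction.stabilizer _ (D⁻¹ * x)).comap τ := by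
    rw [Subgroup.closure_le]
    rintro _ ⟨i, rfl⟩
    show τ (s i) (D⁻¹ * x) = D⁻¹ * x
    rw [map_mul, map_inv₀, hD, hx, mul_inv, mul_mul_mul_comm, inv_mul_cancel₀ (hm i), one_mul]
  exact hfix (hgen ▸ Subgroup.mem_top w)

theorem sphericalIdempotent_W_equivariance_general
    -- Λ: free abelian group of finite rank
    {Λ : Type*} [AddCommGroup Λ]
    -- W: finite Weyl group acting on Λ
    {W : Type*} [Group W] [Fintype W] {r : ℕ}
    (σ : W →* Multiplicative (AddAut Λ)) (s : Fin r → W) (α : Fin r → Λ) (pair : Fin r → Λ →+ ℤ)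
    -- Φ: the reduced crystallographic root system inside Λ
    (Φ : Set Λ)
    (hΦW : ∀ (w : W), ∀ μ ∈ Φ, Multiplicative.toAdd (σ w) μ ∈ Φ)
    (hα : ∀ i, α i ∈ Φ) (hpair : ∀ i, pair i (α i) = 2)
    (hrefl : ∀ (i : Fin r) (μ : Λ), Multiplicative.toAdd (σ (s i)) μ = μ - pair i μ • α i)
    (hs2 : ∀ i, s i * s i = 1)
    (hgen : Subgroup.closure (Set.range s) = ⊤)
    -- K ⊇ ℂ[Λ]: the fraction field, with basis elements ζ λ = z^λ
    {K : Type*} [Field K] [Algebra ℂ K]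
    (ζ : Λ → K) (hζ0 : ζ 0 = 1) (hζadd : ∀ μ ν, ζ (μ + ν) = ζ μ * ζ ν)
    (hζindep : LinearIndependent ℂ ζ)
    -- the W-action on K by ℂ-algebra automorphisms, with w·z^λ = z^{wλ}
    (τ : W →* (K ≃ₐ[ℂ] K)) (hτ : ∀ (w : W) (μ : Λ), τ w (ζ μ) = ζ (Multiplicative.toAdd (σ w) μ))
    (v : ℂ)
    -- the fixed choice of positive roots Φ∨₊
    (Φp : Finset Λ) (hΦp : ∀ μ, μ ∈ Φ ↔ (μ ∈ Φp ∨ -μ ∈ Φp))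
    (hΦpdisj : ∀ μ ∈ Φp, -μ ∉ Φp) (hαp : ∀ i, α i ∈ Φp)
    (hperm : ∀ (i : Fin r), ∀ β ∈ Φp, β ≠ α i → Multiplicative.toAdd (σ (s i)) β ∈ Φp)
    -- 𝒯_w, well defined via any reduced word for w (the 𝒯_i satisfy the braid relations)
    (Tw : W → Module.End ℂ K)
    (hTw : ∀ (w : W) (l : List (Fin r)), (l.map s).prod = w →
      (∀ l' : List (Fin r), (l'.map s).prod = w → l.length ≤ l'.length) →
      Tw w = (l.map (fun i => demWhitC ζ τ s α v i)).prod) :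
    -- (gamtranspro): s_i ∘ ℐ° = m_i ∘ ℐ°
    (∀ (i : Fin r) (f : K),
        τ (s i) ((∑ w : W, Tw w) f) =
          ((1 - algebraMap ℂ K v * ζ (α i)) / (1 - algebraMap ℂ K v * ζ (-α i))) *
            ((∑ w : W, Tw w) f))
    -- (gamprewinv): ∏_{α∨>0}(1 − v z^{−α∨})⁻¹ · ℐ° commutes with the W-action
    ∧ (∀ (w : W) (f : K),
        τ w ((∏ β ∈ Φp, (1 - algebraMap ℂ K v * ζ (-β)))⁻¹ * ((∑ u : W, Tw u) f)) =
          (∏ β ∈ Φp, (1 - algebraMap ℂ K v * ζ (-β)))⁻¹ * ((∑ u : W, Tw u) f)) := by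
  classical
  set V : K := algebraMap ℂ K v
  have hword := exists_word_of_closure_eq_top s hs2 hgen
  have hα0 : ∀ i, α i ≠ 0 := fun i h => by simpa [h] using hpair i
  have hσα : ∀ i, Multiplicative.toAdd (σ (s i)) (α i) = -α i := fun i => by
    rw [hrefl, hpair, two_zsmul]; abel
  have hσinv : ∀ i, Function.Involutive ⇑(Multiplicative.toAdd (σ (s i))) := fun i μ => by
    rw [← toAdd_map_mul_apply, hs2, map_one]; rfl
  have hroot : ∀ μ ∈ Φ, μ ∈ Φp ↔ -μ ∉ Φp :=
    fun μ hμ => ⟨hΦpdisj μ, ((hΦp μ).mp hμ).resolve_right⟩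
  have hdich := wordLength_mul_eq_or hs2 hword
    (fun w => (-1) ^ inversionCount Φp ⇑(Multiplicative.toAdd (σ w)))
    (neg_one_pow_inversionCount_list_prod σ s α hΦpdisj hαp hσinv hσα hperm
      fun w i => hroot _ (hΦW w _ (hα i)))
  have hV_ne : ∀ μ, μ ≠ 0 → 1 - V * ζ μ ≠ 0 := fun μ hμ =>
    sub_ne_zero.mpr (algebraMap_mul_ne_one hζindep hζ0 hμ v).symm
  have hVneg_ne : ∀ i, 1 - V * ζ (-α i) ≠ 0 := fun i => hV_ne _ (neg_ne_zero.mpr (hα0 i))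
  have gamtranspro : ∀ i f, τ (s i) ((∑ w : W, Tw w) f) =
      (1 - V * ζ (α i)) / (1 - V * ζ (-α i)) * ((∑ w : W, Tw w) f) := by
    intro i f
    rw [sum_eq_one_add_mul_sum_ascents (demWhitC ζ τ s α v) Tw (hs2 i) (hdich i)
      fun w => eq_mul_of_wordLength_mul _ Tw hTw (hword w)]
    simp only [Module.End.mul_apply, LinearMap.add_apply, Module.End.one_apply]
    exact reflection_apply_add_demWhitC ζ τ s α v (hs2 i) (by rw [hτ, hσα])
      (by rw [← hζadd, add_neg_cancel, hζ0])
      (by simpa using algebraMap_mul_ne_one hζindep hζ0 (hα0 i) 1) (hVneg_ne i) _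
  refine ⟨gamtranspro, fun w f => apply_inv_mul_eq_of_closure_eq_top τ hgen
    (fun i => div_ne_zero (hV_ne _ (hα0 i)) (hVneg_ne i)) (fun i => ?_) (gamtranspro · f) w⟩
  exact apply_prod_one_sub_of_reflection _ ζ _ (hτ (s i)) (hαp i) (hσinv i) (hσα i)
    (mapsTo_erase_of_reflection hΦpdisj (hαp i) (hσinv i) (hσα i) (hperm i)) v (hVneg_ne i)

/-- **Identities (gamtranspro) and (gamprewinv) in the proof of Theorem 2.6 of "Hecke
Modules from Metaplectic Ice".**  With `𝒯_w` the product of the `𝒯_i` over a reduced word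
for `w` and `ℐ° = Σ_{w∈W} 𝒯_w`: first, `s_i ∘ ℐ° = m_i ∘ ℐ°` where `m_i` is multiplication
by `(1 − v z^{α_i∨})/(1 − v z^{−α_i∨})`; consequently the normalized operator
`∏_{α∨∈Φ∨₊}(1 − v z^{−α∨})⁻¹ · ℐ°` commutes with the `W`-action. -/
theorem sphericalIdempotent_W_equivariance
    -- Λ: free abelian group of finite rank
    {Λ : Type*} [AddCommGroup Λ] [Module.Free ℤ Λ] [Module.Finite ℤ Λ]
    -- W: finite Weyl group acting on Λ
    {W : Type*} [Group W] [Fintype W] {r : ℕ}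
    (σ : W →* Multiplicative (AddAut Λ)) (s : Fin r → W) (α : Fin r → Λ) (pair : Fin r → Λ →+ ℤ)
    -- Φ: the reduced crystallographic root system inside Λ
    (Φ : Set Λ) (hΦfin : Φ.Finite) (hΦneg : ∀ μ ∈ Φ, -μ ∈ Φ)
    (hΦW : ∀ (w : W), ∀ μ ∈ Φ, Multiplicative.toAdd (σ w) μ ∈ Φ)
    (hΦred : ∀ μ ∈ Φ, (2 : ℤ) • μ ∉ Φ)
    (hα : ∀ i, α i ∈ Φ) (hpair : ∀ i, pair i (α i) = 2)
    (hrefl : ∀ (i : Fin r) (μ : Λ), Multiplicative.toAdd (σ (s i)) μ = μ - pair i μ • α i)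
    (hs2 : ∀ i, s i * s i = 1)
    (hgen : Subgroup.closure (Set.range s) = ⊤)
    -- K ⊇ ℂ[Λ]: the fraction field, with basis elements ζ λ = z^λ
    {K : Type*} [Field K] [Algebra ℂ K]
    (ζ : Λ → K) (hζ0 : ζ 0 = 1) (hζadd : ∀ μ ν, ζ (μ + ν) = ζ μ * ζ ν)
    (hζindep : LinearIndependent ℂ ζ)
    -- the W-action on K by ℂ-algebra automorphisms, with w·z^λ = z^{wλ}
    (τ : W →* (K ≃ₐ[ℂ] K)) (hτ : ∀ (w : W) (μ : Λ), τ w (ζ μ) = ζ (Multiplicative.toAdd (σ w) μ))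
    (v : ℂ)
    -- the fixed choice of positive roots Φ∨₊
    (Φp : Finset Λ) (hΦp : ∀ μ, μ ∈ Φ ↔ (μ ∈ Φp ∨ -μ ∈ Φp))
    (hΦpdisj : ∀ μ ∈ Φp, -μ ∉ Φp) (hαp : ∀ i, α i ∈ Φp)
    (hperm : ∀ (i : Fin r), ∀ β ∈ Φp, β ≠ α i → Multiplicative.toAdd (σ (s i)) β ∈ Φp)
    -- 𝒯_w, well defined via any reduced word for w (the 𝒯_i satisfy the braid relations)
    (Tw : W → Module.End ℂ K)
    (hTw : ∀ (w : W) (l : List (Fin r)), (l.map s).prod = w →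
      (∀ l' : List (Fin r), (l'.map s).prod = w → l.length ≤ l'.length) →
      Tw w = (l.map (fun i => demWhitC ζ τ s α v i)).prod) :
    -- (gamtranspro): s_i ∘ ℐ° = m_i ∘ ℐ°
    (∀ (i : Fin r) (f : K),
        τ (s i) ((∑ w : W, Tw w) f) =
          ((1 - algebraMap ℂ K v * ζ (α i)) / (1 - algebraMap ℂ K v * ζ (-α i))) *
            ((∑ w : W, Tw w) f))
    -- (gamprewinv): ∏_{α∨>0}(1 − v z^{−α∨})⁻¹ · ℐ° commutes with the W-action
    ∧ (∀ (w : W) (f : K),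
        τ w ((∏ β ∈ Φp, (1 - algebraMap ℂ K v * ζ (-β)))⁻¹ * ((∑ u : W, Tw u) f)) =
          (∏ β ∈ Φp, (1 - algebraMap ℂ K v * ζ (-β)))⁻¹ * ((∑ u : W, Tw u) f)) :=
  sphericalIdempotent_W_equivariance_general σ s α pair Φ hΦW hα hpair hrefl hs2 hgen ζ hζ0 hζadd
    hζindep τ hτ v Φp hΦp hΦpdisj hαp hperm Tw hTw
end
end

section
/- Triangularity of the twisted affine R-matrix: (1) for every x ∈ ℂˣ, (τ∘R^γ(x)) ∘ (τ∘R^γ(x⁻¹)) = (q − x q⁻¹)(q − x⁻¹ q⁻¹)·id_{V⊗V}; (2) in the limit x → 0 one recovers the finite R-matrix: R^γ(0) = R^γ. (Proposition 4.3 of 'Hecke Modules from Metaplectic Ice'.) -/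
/-!
Endomorphisms of `V ⊗ V` are matrices indexed by `Fin n × Fin n`, and `τ` is the permutation
matrix `P` of the swap `(a, b) ↦ (b, a)`.  Then `R^γ(x) = diag(D_x) + P · diag(C_x)` for explicit
coefficient functions `D_x, C_x`, so `τ R^γ(x) = P · diag(D_x) + diag(C_x)`.  Because `P² = 1` and
`diag(f) · P = P · diag(f ∘ swap)`, a product of two matrices of the shape `P · diag(a) + diag(b)`
is `diag(u) + P · diag(w)` with `u, w` computed pointwise; for `x` and `x⁻¹` this gives
`u = (q − x q⁻¹)(q − x⁻¹ q⁻¹)` and `w = 0`, the key scalar identity on each block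
`⟨e_a ⊗ e_b, e_b ⊗ e_a⟩` being `(1 − x)(1 − x⁻¹) + (q − q⁻¹)² = (q − x q⁻¹)(q − x⁻¹ q⁻¹)`.
Since `x` enters `R^γ(x)` affinely, `R^γ(0) = R^γ` is immediate.
-/

open scoped Kronecker

noncomputable section

/-- The matrix unit `e_{ij} ∈ End(ℂⁿ)`. -/
def matE (n : ℕ) (i j : Fin n) : Matrix (Fin n) (Fin n) ℂ := Matrix.single i j 1

/-- The flip `τ : V ⊗ V → V ⊗ V`, `x ⊗ y ↦ y ⊗ x`, as a matrix. -/
def tauMat (n : ℕ) : Matrix (Fin n × Fin n) (Fin n × Fin n) ℂ :=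
  fun p q => if p.1 = q.2 ∧ p.2 = q.1 then 1 else 0

/-- The multiparameter R-matrix `R^γ`. -/
def Rgamma (n : ℕ) (q : ℂ) (γ : Fin n → Fin n → ℂ) :
    Matrix (Fin n × Fin n) (Fin n × Fin n) ℂ :=
  (∑ i : Fin n, q • (matE n i i ⊗ₖ matE n i i))
  + (∑ i : Fin n, ∑ j : Fin n, if i < j then (γ i j)⁻¹ • (matE n i i ⊗ₖ matE n j j) else 0)
  + (∑ i : Fin n, ∑ j : Fin n, if j < i then (γ j i) • (matE n i i ⊗ₖ matE n j j) else 0)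
  + (q - q⁻¹) • ∑ i : Fin n, ∑ j : Fin n, if j < i then matE n i j ⊗ₖ matE n j i else 0

/-- The twisted affine R-matrix `R^γ(x)`. -/
def RgammaAff (n : ℕ) (q : ℂ) (γ : Fin n → Fin n → ℂ) (x : ℂ) :
    Matrix (Fin n × Fin n) (Fin n × Fin n) ℂ :=
  (∑ i : Fin n, (q - x * q⁻¹) • (matE n i i ⊗ₖ matE n i i))
  + (∑ i : Fin n, ∑ j : Fin n,
      if i < j then ((γ i j)⁻¹ * (1 - x)) • (matE n i i ⊗ₖ matE n j j) else 0)
  + (∑ i : Fin n, ∑ j : Fin n,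
      if j < i then (γ j i * (1 - x)) • (matE n i i ⊗ₖ matE n j j) else 0)
  + (q - q⁻¹) • (∑ i : Fin n, ∑ j : Fin n, if j < i then matE n i j ⊗ₖ matE n j i else 0)
  + (x * (q - q⁻¹)) •
      ∑ i : Fin n, ∑ j : Fin n, if i < j then matE n i j ⊗ₖ matE n j i else 0

open Matrix Equiv

section PermMatrix

variable {ι R : Type*} [Fintype ι] [DecidableEq ι] [CommRing R]

theorem diagonal_mul_permMatrix (σ : Perm ι) (f : ι → R) :
    diagonal f * σ.permMatrix R = σ.permMatrix R * diagonal (f ∘ σ.symm) := by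
  ext i j
  rw [PEquiv.mul_toMatrix_toPEquiv, PEquiv.toMatrix_toPEquiv_mul]
  by_cases h : σ i = j
  · subst h; simp
  · simp [Equiv.eq_symm_apply, h]

theorem permMatrix_mul_diagonal_add_diagonal_mul {σ : Perm ι} (hσ : σ * σ = 1)
    (a b c d : ι → R) :
    (σ.permMatrix R * diagonal a + diagonal b) * (σ.permMatrix R * diagonal c + diagonal d) =
      diagonal ((a ∘ σ) * c + b * d) + σ.permMatrix R * diagonal (a * d + (b ∘ σ) * c) := by
  set P := σ.permMatrix R
  have hsymm : σ.symm = σ := by rw [← Perm.inv_def, inv_eq_of_mul_eq_one_right hσ]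
  have hPP : ∀ M : Matrix ι ι R, P * (P * M) = M := by
    intro M
    rw [← Matrix.mul_assoc, ← permMatrix_mul, hσ, permMatrix_one, Matrix.one_mul]
  have hDP : ∀ (f : ι → R) (M : Matrix ι ι R),
      diagonal f * (P * M) = P * (diagonal (f ∘ σ) * M) := by
    intro f M
    rw [← Matrix.mul_assoc, diagonal_mul_permMatrix, hsymm, Matrix.mul_assoc]
  simp only [add_mul, mul_add, Matrix.mul_assoc, hDP, hPP, diagonal_mul_diagonal]
  simp only [Pi.add_def, Pi.mul_def, ← diagonal_add, mul_add]
  abel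

end PermMatrix

theorem Equiv.prodComm_mul_self (α : Type*) :
    (prodComm α α : Perm (α × α)) * prodComm α α = 1 :=
  Equiv.ext fun _ => rfl

abbrev flipMatrix (n : ℕ) : Matrix (Fin n × Fin n) (Fin n × Fin n) ℂ :=
  Perm.permMatrix ℂ (prodComm (Fin n) (Fin n))

theorem tauMat_eq_flipMatrix (n : ℕ) : tauMat n = flipMatrix n := by
  ext ⟨a, b⟩ ⟨c, d⟩
  simp [tauMat, PEquiv.toMatrix_apply, and_comm]

theorem flipMatrix_mul_self (n : ℕ) : flipMatrix n * flipMatrix n = 1 := by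
  rw [← permMatrix_mul, prodComm_mul_self, permMatrix_one]

section MatrixUnits

variable {n : ℕ}

theorem matE_kronecker_matE (i j k l : Fin n) :
    matE n i j ⊗ₖ matE n k l = single (i, k) (j, l) 1 := by
  rw [matE, matE, single_kronecker_single, mul_one]

theorem sum_smul_matE_kronecker_self (c : ℂ) :
    ∑ i, c • (matE n i i ⊗ₖ matE n i i) = diagonal fun p => if p.1 = p.2 then c else 0 := by
  rw [← sum_single_eq_diagonal, Fintype.sum_prod_type]
  simp_rw [matE_kronecker_matE, smul_single, smul_eq_mul, mul_one]
  refine Finset.sum_congr rfl fun i _ => ?_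
  rw [Finset.sum_eq_single i] <;> simp +contextual [eq_comm]

theorem sum_sum_ite_smul_matE_kronecker (r : Fin n → Fin n → Prop) [DecidableRel r]
    (c : Fin n → Fin n → ℂ) :
    ∑ i, ∑ j, (if r i j then c i j • (matE n i i ⊗ₖ matE n j j) else 0) =
      diagonal fun p => if r p.1 p.2 then c p.1 p.2 else 0 := by
  rw [← sum_single_eq_diagonal, Fintype.sum_prod_type]
  refine Finset.sum_congr rfl fun i _ => Finset.sum_congr rfl fun j _ => ?_
  split_ifs <;> simp [matE_kronecker_matE, smul_single]

theorem sum_sum_ite_matE_kronecker_flip (r : Fin n → Fin n → Prop) [DecidableRel r] :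
    ∑ i, ∑ j, (if r i j then matE n i j ⊗ₖ matE n j i else 0) =
      flipMatrix n * diagonal fun p => if r p.2 p.1 then 1 else 0 := by
  rw [← sum_single_eq_diagonal, Finset.mul_sum, Fintype.sum_prod_type, Finset.sum_comm]
  refine Finset.sum_congr rfl fun i _ => Finset.sum_congr rfl fun j _ => ?_
  rw [PEquiv.toMatrix_toPEquiv_mul]
  split_ifs
  · ext ⟨a, b⟩ ⟨c, d⟩
    rw [matE_kronecker_matE]
    simp [single_apply, and_comm]
  · simp

end MatrixUnits

namespace RgammaAff

variable {n : ℕ}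

def diagCoeff (q : ℂ) (γ : Fin n → Fin n → ℂ) (x : ℂ) (p : Fin n × Fin n) : ℂ :=
  if p.1 = p.2 then q - x * q⁻¹
  else if p.1 < p.2 then (γ p.1 p.2)⁻¹ * (1 - x) else γ p.2 p.1 * (1 - x)

def flipCoeff (q x : ℂ) (p : Fin n × Fin n) : ℂ :=
  if p.1 < p.2 then q - q⁻¹ else if p.2 < p.1 then x * (q - q⁻¹) else 0

theorem diagCoeff_swap_mul_add_flipCoeff_mul {q : ℂ} (hq : q ≠ 0) {γ : Fin n → Fin n → ℂ}
    (hγ : ∀ i j : Fin n, i < j → γ i j ≠ 0) {x : ℂ} (hx : x ≠ 0) (a b : Fin n) :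
    diagCoeff q γ x (b, a) * diagCoeff q γ x⁻¹ (a, b) +
        flipCoeff q x (a, b) * flipCoeff q x⁻¹ (a, b) =
      (q - x * q⁻¹) * (q - x⁻¹ * q⁻¹) := by
  rcases lt_trichotomy a b with h | rfl | h
  · have := hγ a b h
    simp only [diagCoeff, flipCoeff, h, h.ne, h.ne', not_lt_of_gt h, if_true, if_false]
    field_simp
    ring
  · simp [diagCoeff, flipCoeff]
  · have := hγ b a h
    simp only [diagCoeff, flipCoeff, h, h.ne, h.ne', not_lt_of_gt h, if_true, if_false]
    field_simp
    ring

theorem diagCoeff_mul_add_flipCoeff_swap_mul {q : ℂ} {γ : Fin n → Fin n → ℂ} {x : ℂ}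
    (hx : x ≠ 0) (a b : Fin n) :
    diagCoeff q γ x (a, b) * flipCoeff q x⁻¹ (a, b) +
        flipCoeff q x (b, a) * diagCoeff q γ x⁻¹ (a, b) = 0 := by
  rcases lt_trichotomy a b with h | rfl | h
  · simp only [diagCoeff, flipCoeff, h, h.ne, not_lt_of_gt h, if_true, if_false]
    field_simp
    ring
  · simp [diagCoeff, flipCoeff]
  · simp only [diagCoeff, flipCoeff, h, h.ne', not_lt_of_gt h, if_true, if_false]
    field_simp
    ring

end RgammaAff

open RgammaAff

theorem RgammaAff_eq_diagonal_add (n : ℕ) (q : ℂ) (γ : Fin n → Fin n → ℂ) (x : ℂ) :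
    RgammaAff n q γ x = diagonal (diagCoeff q γ x) + flipMatrix n * diagonal (flipCoeff q x) := by
  rw [RgammaAff, sum_smul_matE_kronecker_self, sum_sum_ite_smul_matE_kronecker,
    sum_sum_ite_smul_matE_kronecker (fun i j => j < i),
    sum_sum_ite_matE_kronecker_flip (fun i j => j < i), sum_sum_ite_matE_kronecker_flip]
  simp only [← Matrix.mul_smul, ← diagonal_smul, add_assoc, ← mul_add, diagonal_add]
  congr 3 <;> funext ⟨a, b⟩ <;> simp only [diagCoeff, flipCoeff, Pi.smul_apply, smul_eq_mul]
  all_goals split_ifs <;> first | ring1 | (exfalso; order)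

theorem flipMatrix_mul_RgammaAff (n : ℕ) (q : ℂ) (γ : Fin n → Fin n → ℂ) (x : ℂ) :
    flipMatrix n * RgammaAff n q γ x =
      flipMatrix n * diagonal (diagCoeff q γ x) + diagonal (flipCoeff q x) := by
  rw [RgammaAff_eq_diagonal_add, mul_add, ← Matrix.mul_assoc, flipMatrix_mul_self,
    Matrix.one_mul]

theorem RgammaAff_zero (n : ℕ) (q : ℂ) (γ : Fin n → Fin n → ℂ) :
    RgammaAff n q γ 0 = Rgamma n q γ := by
  simp only [RgammaAff, Rgamma, zero_mul, sub_zero, mul_one, zero_smul, add_zero]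

theorem RgammaAff_triangularity_general (n : ℕ) (q : ℂ) (hq : q ≠ 0)
    (γ : Fin n → Fin n → ℂ) (hγ : ∀ i j : Fin n, i < j → γ i j ≠ 0) :
    (∀ x : ℂ, x ≠ 0 →
      (tauMat n * RgammaAff n q γ x) * (tauMat n * RgammaAff n q γ x⁻¹) =
        ((q - x * q⁻¹) * (q - x⁻¹ * q⁻¹)) • 1)
    ∧ RgammaAff n q γ 0 = Rgamma n q γ := by
  refine ⟨fun x hx => ?_, RgammaAff_zero n q γ⟩
  rw [tauMat_eq_flipMatrix, flipMatrix_mul_RgammaAff, flipMatrix_mul_RgammaAff,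
    permMatrix_mul_diagonal_add_diagonal_mul (prodComm_mul_self _)]
  have hdiag : (diagCoeff q γ x ∘ prodComm _ _) * diagCoeff q γ x⁻¹ +
      flipCoeff q x * flipCoeff q x⁻¹ = fun _ => (q - x * q⁻¹) * (q - x⁻¹ * q⁻¹) :=
    funext fun p => diagCoeff_swap_mul_add_flipCoeff_mul hq hγ hx p.1 p.2
  have hflip : diagCoeff q γ x * flipCoeff q x⁻¹ +
      (flipCoeff q x ∘ prodComm _ _) * diagCoeff q γ x⁻¹ = 0 :=
    funext fun p => diagCoeff_mul_add_flipCoeff_swap_mul hx p.1 p.2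
  rw [hdiag, hflip, smul_one_eq_diagonal]
  simp

/-- **Proposition 4.3 of "Hecke Modules from Metaplectic Ice".**
(1) `(τ∘R^γ(x)) ∘ (τ∘R^γ(x⁻¹)) = (q − x q⁻¹)(q − x⁻¹ q⁻¹)·id` for every `x ∈ ℂˣ`;
(2) in the limit `x → 0` one recovers the finite R-matrix: `R^γ(0) = R^γ`. -/
theorem RgammaAff_triangularity (n : ℕ) (hn : 1 ≤ n) (q : ℂ) (hq : q ≠ 0)
    (v : ℂ) (hv : v = q ^ 2)
    (γ : Fin n → Fin n → ℂ) (hγ : ∀ i j : Fin n, i < j → γ i j ≠ 0) :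
    (∀ x : ℂ, x ≠ 0 →
      (tauMat n * RgammaAff n q γ x) * (tauMat n * RgammaAff n q γ x⁻¹) =
        ((q - x * q⁻¹) * (q - x⁻¹ * q⁻¹)) • 1)
    ∧ RgammaAff n q γ 0 = Rgamma n q γ :=
  RgammaAff_triangularity_general n q hq γ hγ
end
end
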